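/- arXiv:1311.1999 — 10 statements merged into one kernel-verified Lean document; each statement's English description precedes it below -/
import Mathlib

section
/- Let K be a field of characteristic 2, m a natural number, q0 = 2^m and q = 2*q0^2. Suppose x, y, z, w ∈ K satisfy the five equations (with t = 1): y^2 + x*z + w = 0; z^{q0} + x^{q0+1} + y = 0; w^{q0} + y*x^{q0} + z = 0; x*w^{q0} + y*z^{q0} + w = 0; and y*w^{q0} + z^{q0+1} + w*x^{q0} = 0. Then z = x^{2q0+1} - y^{2q0}, w = x*y^{2q0} - z^{2q0}, and y^q - y = x^{q0}*(x^q - x). -/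
/-- The five equations of the smooth model of the Suzuki curve imply
the defining relations z = x^{2q0+1} - y^{2q0}, w = x*y^{2q0} - z^{2q0}, and
y^q - y = x^{q0}(x^q - x). -/
theorem suzuki_five_equations_imply_curve
    (K : Type*) [Field K] [CharP K 2] (m q0 q : ℕ)
    (hq0 : q0 = 2 ^ m) (hq : q = 2 * q0 ^ 2)
    (x y z w : K)
    (h1 : y ^ 2 + x * z + w = 0)
    (h2 : z ^ q0 + x ^ (q0 + 1) + y = 0)
    (h3 : w ^ q0 + y * x ^ q0 + z = 0)
    (h4 : x * w ^ q0 + y * z ^ q0 + w = 0)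
    (h5 : y * w ^ q0 + z ^ (q0 + 1) + w * x ^ q0 = 0) :
    z = x ^ (2 * q0 + 1) - y ^ (2 * q0) ∧
    w = x * y ^ (2 * q0) - z ^ (2 * q0) ∧
    y ^ q - y = x ^ q0 * (x ^ q - x) := by
  subst hq0 hq
  have two0 : (2 : K) = 0 := by
    have := CharP.cast_eq_zero K 2; exact_mod_cast this
  have frob : ∀ a b : K, (a + b) ^ (2 ^ m) = a ^ (2 ^ m) + b ^ (2 ^ m) := fun a b =>
    add_pow_char_pow a b 2 m
  have frob2 : ∀ a b : K, (a + b) ^ 2 = a ^ 2 + b ^ 2 := fun a b =>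
    add_pow_char a b 2
  -- raise h1 to the power q0
  have H1 : y ^ (2 * 2 ^ m) + x ^ (2 ^ m) * z ^ (2 ^ m) + w ^ (2 ^ m) = 0 := by
    have h : (y ^ 2 + x * z + w) ^ (2 ^ m) = 0 := by
      rw [h1]; exact zero_pow (by positivity)
    rw [frob, frob, mul_pow, ← pow_mul] at h
    exact h
  -- first relation
  have e1 : z = x ^ (2 * 2 ^ m + 1) + y ^ (2 * 2 ^ m) := by
    linear_combination h3 - H1 + x ^ (2 ^ m) * h2 -
      (x ^ (2 * 2 ^ m + 1) + x ^ (2 ^ m) * y) * two0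
  -- square h2
  have H2 : z ^ (2 ^ m * 2) + x ^ ((2 ^ m + 1) * 2) + y ^ 2 = 0 := by
    have h : (z ^ (2 ^ m) + x ^ (2 ^ m + 1) + y) ^ 2 = 0 := by
      rw [h2]; exact zero_pow two_ne_zero
    rw [frob2, frob2, ← pow_mul, ← pow_mul] at h
    exact h
  -- raise e1 to the power q0
  have E : z ^ (2 ^ m) = x ^ ((2 * 2 ^ m + 1) * 2 ^ m) + y ^ (2 * 2 ^ m * 2 ^ m) := by
    have h : z ^ (2 ^ m) = (x ^ (2 * 2 ^ m + 1)) ^ (2 ^ m) + (y ^ (2 * 2 ^ m)) ^ (2 ^ m) := by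
      rw [e1, frob]
    rw [← pow_mul, ← pow_mul] at h
    exact h
  refine ⟨?_, ?_, ?_⟩
  · rw [CharTwo.sub_eq_add]; exact e1
  · rw [CharTwo.sub_eq_add]
    linear_combination h1 - x * e1 - H2 - x * y ^ (2 * 2 ^ m) * two0
  · linear_combination h2 - E - (y + x ^ ((2 * 2 ^ m + 1) * 2 ^ m)) * two0
end

section
/- Let K be a field of characteristic 2, m a natural number, q0 = 2^m and q = 2*q0^2. Suppose x, y ∈ K satisfy y^q - y = x^{q0}*(x^q - x), and define z := x^{2q0+1} - y^{2q0} and w := x*y^{2q0} - z^{2q0}. Then the five equations hold (with t = 1): y^2 + x*z + w = 0; z^{q0} + x^{q0+1} + y = 0; w^{q0} + y*x^{q0} + z = 0; x*w^{q0} + y*z^{q0} + w = 0; and y*w^{q0} + z^{q0+1} + w*x^{q0} = 0. -/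
/-- A point on the Suzuki curve, together with z and w defined from x, y,
satisfies the five equations of the smooth model of the Suzuki curve. -/
theorem suzuki_curve_satisfies_five_equations
    (K : Type*) [Field K] [CharP K 2] (m q0 q : ℕ)
    (hq0 : q0 = 2 ^ m) (hq : q = 2 * q0 ^ 2)
    (x y z w : K)
    (hxy : y ^ q - y = x ^ q0 * (x ^ q - x))
    (hz : z = x ^ (2 * q0 + 1) - y ^ (2 * q0))
    (hw : w = x * y ^ (2 * q0) - z ^ (2 * q0)) :
    y ^ 2 + x * z + w = 0 ∧
    z ^ q0 + x ^ (q0 + 1) + y = 0 ∧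
    w ^ q0 + y * x ^ q0 + z = 0 ∧
    x * w ^ q0 + y * z ^ q0 + w = 0 ∧
    y * w ^ q0 + z ^ (q0 + 1) + w * x ^ q0 = 0 := by
  subst hq
  haveI : Fact (Nat.Prime 2) := ⟨Nat.prime_two⟩
  have h2 : (2 : K) = 0 := by exact_mod_cast CharP.cast_eq_zero K 2
  have hF : ∀ a b : K, (a + b) ^ q0 = a ^ q0 + b ^ q0 := by
    intro a b; rw [hq0]; exact add_pow_char_pow a b 2 _
  have hF2 : ∀ a b : K, (a + b) ^ (2 * q0) = a ^ (2 * q0) + b ^ (2 * q0) := by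
    intro a b
    have h : 2 * q0 = 2 ^ (m + 1) := by rw [hq0, pow_succ]; ring
    rw [h]; exact add_pow_char_pow a b 2 _
  -- rewrite subtraction as addition (char 2)
  rw [CharTwo.sub_eq_add] at hz hw
  -- the curve relation, solved for y^q
  have hyq : y ^ (2 * q0 ^ 2) = y + x ^ (2 * q0 ^ 2 + q0) + x ^ (q0 + 1) := by
    linear_combination hxy - x ^ (q0 + 1) * h2
  -- key identity for z^q0
  have e2 : z ^ q0 = x ^ (q0 + 1) + y := by
    have hzs : z ^ q0 = x ^ ((2 * q0 + 1) * q0) + y ^ (2 * q0 * q0) := by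
      rw [hz, hF, ← pow_mul, ← pow_mul]
    rw [show (2 * q0 + 1) * q0 = 2 * q0 ^ 2 + q0 by ring,
        show 2 * q0 * q0 = 2 * q0 ^ 2 by ring] at hzs
    rw [hzs, hyq]
    linear_combination x ^ (2 * q0 ^ 2 + q0) * h2
  -- key identity for w^q0
  have e3 : w ^ q0 = x ^ q0 * y + z := by
    have hzq : z ^ (2 * q0 ^ 2) = x ^ ((q0 + 1) * (2 * q0)) + y ^ (2 * q0) := by
      rw [show 2 * q0 ^ 2 = q0 * (2 * q0) by ring, pow_mul, e2, hF2, ← pow_mul]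
    have hws : w ^ q0 = x ^ q0 * y ^ (2 * q0 ^ 2) + z ^ (2 * q0 ^ 2) := by
      rw [hw, hF, mul_pow, ← pow_mul, ← pow_mul,
        show 2 * q0 * q0 = 2 * q0 ^ 2 by ring]
    rw [hws, hzq, hyq, hz]
    linear_combination (x ^ q0 * x ^ (2 * q0 ^ 2 + q0)) * h2
  -- first equation
  have e1 : y ^ 2 + x * z + w = 0 := by
    have hz2 : z ^ (2 * q0) = (x ^ (q0 + 1) + y) ^ 2 := by
      rw [show 2 * q0 = q0 * 2 by ring, pow_mul, e2]
    rw [hw, hz2, hz]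
    linear_combination (y ^ 2 + x ^ (2 * q0 + 1) * x + x * y ^ (2 * q0)
      + x ^ (q0 + 1) * y) * h2
  refine ⟨e1, ?_, ?_, ?_, ?_⟩
  · linear_combination e2 + (x ^ (q0 + 1) + y) * h2
  · linear_combination e3 + (x ^ q0 * y + z) * h2
  · linear_combination x * e3 + y * e2 + e1 + x ^ (q0 + 1) * y * h2
  · linear_combination y * e3 + z * e2 + x ^ q0 * e1 + y * z * h2
end

section
/- Let K be a field of characteristic 2, m a natural number, q0 = 2^m and q = 2*q0^2. Suppose x, y ∈ K satisfy y^q - y = x^{q0}*(x^q - x), and define z := x^{2q0+1} - y^{2q0} and w := x*y^{2q0} - z^{2q0}. Then w^q - w = y^{2q0}*(x^q - x). -/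
/-- On the Suzuki curve, w := x*y^{2q0} - z^{2q0} satisfies
w^q - w = y^{2q0}(x^q - x). -/
theorem suzuki_w_equation
    (K : Type*) [Field K] [CharP K 2] (m q0 q : ℕ)
    (hq0 : q0 = 2 ^ m) (hq : q = 2 * q0 ^ 2)
    (x y z w : K)
    (hxy : y ^ q - y = x ^ q0 * (x ^ q - x))
    (hz : z = x ^ (2 * q0 + 1) - y ^ (2 * q0))
    (hw : w = x * y ^ (2 * q0) - z ^ (2 * q0)) :
    w ^ q - w = y ^ (2 * q0) * (x ^ q - x) := by
  haveI : Fact (Nat.Prime 2) := ⟨Nat.prime_two⟩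
  subst hz hw hq
  simp only [CharTwo.sub_eq_add] at hxy ⊢
  have htwo : (2 : K) = 0 := CharP.cast_eq_zero K 2
  -- Frobenius additivity for the exponents we need
  have Fa : ∀ u v : K, (u + v) ^ (2 * q0) = u ^ (2 * q0) + v ^ (2 * q0) := by
    intro u v
    have h : 2 * q0 = 2 ^ (m + 1) := by rw [hq0, pow_succ, mul_comm]
    rw [h]; exact add_pow_char_pow u v 2 (m + 1)
  have Fb : ∀ u v : K, (u + v) ^ (2 * q0 ^ 2) = u ^ (2 * q0 ^ 2) + v ^ (2 * q0 ^ 2) := by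
    intro u v
    have h : 2 * q0 ^ 2 = 2 ^ (2 * m + 1) := by rw [hq0, ← pow_mul]; ring
    rw [h]; exact add_pow_char_pow u v 2 (2 * m + 1)
  have Fc : ∀ u v : K, (u + v) ^ (4 * q0 ^ 2) = u ^ (4 * q0 ^ 2) + v ^ (4 * q0 ^ 2) := by
    intro u v
    have h : 4 * q0 ^ 2 = 2 ^ (2 * m + 2) := by
      rw [hq0, ← pow_mul]
      ring
    rw [h]; exact add_pow_char_pow u v 2 (2 * m + 2)
  -- raise the curve equation to the powers 2*q0 and 4*q0^2
  have C : (y ^ (2 * q0 ^ 2)) ^ (2 * q0) + y ^ (2 * q0)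
      = (x ^ q0) ^ (2 * q0) * ((x ^ (2 * q0 ^ 2)) ^ (2 * q0) + x ^ (2 * q0)) := by
    rw [← Fa, hxy, mul_pow, Fa]
  have D : (y ^ (2 * q0 ^ 2)) ^ (4 * q0 ^ 2) + y ^ (4 * q0 ^ 2)
      = (x ^ q0) ^ (4 * q0 ^ 2) * ((x ^ (2 * q0 ^ 2)) ^ (4 * q0 ^ 2) + x ^ (4 * q0 ^ 2)) := by
    rw [← Fc, hxy, mul_pow, Fc]
  -- expand the goal using Frobenius additivity
  rw [Fa (x ^ (2 * q0 + 1)) (y ^ (2 * q0)), Fb, Fb, mul_pow]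
  linear_combination (x ^ (2 * q0 ^ 2)) * C + D +
    (x ^ (8 * q0 ^ 4 + 4 * q0 ^ 3) + x ^ (4 * q0 ^ 2 + 2 * q0) + x ^ (4 * q0 ^ 3 + 4 * q0 ^ 2)
      - x ^ (2 * q0 ^ 2) * y ^ (2 * q0)) * htwo
end

section
/- Let K be a field of characteristic p, e ≥ 1, q0 = p^e and q = q0^2. Suppose x, y ∈ K satisfy y^{q0} + y = x^{q0+1}. Then all three 2×2 minors of the matrix with rows (1, -x^{q0}, y^{q0}) and (x^q - x, y - y^q, x*y^q - y*x^q) vanish; explicitly: (y - y^q) + x^{q0}*(x^q - x) = 0, (x*y^q - y*x^q) - y^{q0}*(x^q - x) = 0, and (-x^{q0})*(x*y^q - y*x^q) - y^{q0}*(y - y^q) = 0. -/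
/-- On the Hermitian curve, the tangent-line coefficient vector
(1, -x^{q0}, y^{q0}) is proportional to the Plücker coordinate vector
(x^q - x, y - y^q, x*y^q - y*x^q): all 2×2 minors vanish. -/
theorem hermitian_tangent_pluecker
    (p : ℕ) [Fact p.Prime] (K : Type*) [Field K] [CharP K p]
    (e q0 q : ℕ) (he : 1 ≤ e) (hq0 : q0 = p ^ e) (hq : q = q0 ^ 2)
    (x y : K)
    (hxy : y ^ q0 + y = x ^ (q0 + 1)) :
    (y - y ^ q) + x ^ q0 * (x ^ q - x) = 0 ∧
    (x * y ^ q - y * x ^ q) - y ^ q0 * (x ^ q - x) = 0 ∧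
    (-(x ^ q0)) * (x * y ^ q - y * x ^ q) - y ^ q0 * (y - y ^ q) = 0 := by
  have key : y ^ q + y ^ q0 = x ^ q * x ^ q0 := by
    have h := congrArg (· ^ q0) hxy
    rw [hq0, add_pow_char_pow, ← hq0, ← pow_mul, ← pow_mul] at h
    have hqm : q = q0 * q0 := by rw [hq, sq]
    calc y ^ q + y ^ q0 = y ^ (q0 * q0) + y ^ q0 := by rw [hqm]
      _ = x ^ ((q0 + 1) * q0) := h
      _ = x ^ q * x ^ q0 := by rw [hqm]; ring
  refine ⟨by linear_combination hxy - key, by linear_combination x * key - x ^ q * hxy,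
    by linear_combination y ^ q * hxy - y * key⟩
end

section
/- Let K be a field of characteristic 3, m a natural number, q0 = 3^m and q = 3*q0^2. Suppose x, y1, w1 ∈ K satisfy y1 = x^{q0+1} - w1^{q0} and w1 = x^{3q0+1} - y1^{3q0}. Then y1^q - y1 = x^{q0}*(x^q - x). -/
/-- The relations y1 = x^{q0+1} - w1^{q0} and w1 = x^{3q0+1} - y1^{3q0}
imply the first defining equation of the Ree curve. -/
theorem ree_first_equation
    (K : Type*) [Field K] [CharP K 3] (m q0 q : ℕ)
    (hq0 : q0 = 3 ^ m) (hq : q = 3 * q0 ^ 2)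
    (x y1 w1 : K)
    (hy1 : y1 = x ^ (q0 + 1) - w1 ^ q0)
    (hw1 : w1 = x ^ (3 * q0 + 1) - y1 ^ (3 * q0)) :
    y1 ^ q - y1 = x ^ q0 * (x ^ q - x) := by
  subst hq
  have : Fact (Nat.Prime 3) := ⟨by norm_num⟩
  have f0 : ∀ a b : K, (a - b) ^ q0 = a ^ q0 - b ^ q0 := by
    subst hq0; exact fun a b => sub_pow_char_pow (R := K) (p := 3) (n := m) a b
  have f1 : ∀ a b : K, (a - b) ^ (3 * q0) = a ^ (3 * q0) - b ^ (3 * q0) := by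
    have h : 3 * q0 = 3 ^ (m + 1) := by subst hq0; ring
    rw [h]; exact fun a b => sub_pow_char_pow (R := K) (p := 3) (n := m + 1) a b
  have fq : ∀ a b : K, (a - b) ^ (3 * q0 ^ 2) = a ^ (3 * q0 ^ 2) - b ^ (3 * q0 ^ 2) := by
    have h : 3 * q0 ^ 2 = 3 ^ (2 * m + 1) := by subst hq0; ring
    rw [h]; exact fun a b => sub_pow_char_pow (R := K) (p := 3) (n := 2 * m + 1) a b
  have hA : y1 ^ (3 * q0) = x ^ ((q0 + 1) * (3 * q0)) - w1 ^ (3 * q0 ^ 2) := by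
    rw [hy1, f1, ← pow_mul, ← pow_mul]
    congr 1
    ring_nf
  have hB : w1 ^ (3 * q0 ^ 2) - w1 = x ^ ((q0 + 1) * (3 * q0)) - x ^ (3 * q0 + 1) := by
    linear_combination hA - hw1
  have hC : w1 ^ (3 * q0 ^ 2 * q0) - w1 ^ q0 =
      x ^ ((q0 + 1) * (3 * q0) * q0) - x ^ ((3 * q0 + 1) * q0) := by
    calc w1 ^ (3 * q0 ^ 2 * q0) - w1 ^ q0 = (w1 ^ (3 * q0 ^ 2) - w1) ^ q0 := by
          rw [f0, pow_mul]
      _ = (x ^ ((q0 + 1) * (3 * q0)) - x ^ (3 * q0 + 1)) ^ q0 := by rw [hB]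
      _ = _ := by rw [f0, ← pow_mul, ← pow_mul]
  rw [hy1, fq]
  linear_combination -hC
end

section
/- Let K be a field of characteristic 3, m a natural number, q0 = 3^m and q = 3*q0^2. Suppose x, y1, y2 ∈ K satisfy y1^q - y1 = x^{q0}*(x^q - x) and y2^q - y2 = x^{q0}*(y1^q - y1), and define w1 := x^{3q0+1} - y1^{3q0} and w2 := x*y1^{3q0} - y2^{3q0}. Then y1 = x^{q0+1} - w1^{q0} and y2 = x^{q0}*y1 - w2^{q0}. -/
/-- On the Ree curve, with w1 := x^{3q0+1} - y1^{3q0} and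
w2 := x*y1^{3q0} - y2^{3q0}, we have y1 = x^{q0+1} - w1^{q0} and
y2 = x^{q0}*y1 - w2^{q0}. -/
theorem ree_curve_satisfies_w_relations
    (K : Type*) [Field K] [CharP K 3] (m q0 q : ℕ)
    (hq0 : q0 = 3 ^ m) (hq : q = 3 * q0 ^ 2)
    (x y1 y2 w1 w2 : K)
    (h1 : y1 ^ q - y1 = x ^ q0 * (x ^ q - x))
    (h2 : y2 ^ q - y2 = x ^ q0 * (y1 ^ q - y1))
    (hw1 : w1 = x ^ (3 * q0 + 1) - y1 ^ (3 * q0))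
    (hw2 : w2 = x * y1 ^ (3 * q0) - y2 ^ (3 * q0)) :
    y1 = x ^ (q0 + 1) - w1 ^ q0 ∧ y2 = x ^ q0 * y1 - w2 ^ q0 := by
  subst hq0 hq hw1 hw2
  have frob : ∀ a b : K, (a - b) ^ 3 ^ m = a ^ 3 ^ m - b ^ 3 ^ m :=
    fun a b => sub_pow_char_pow (p := 3) a b m
  have e1 : (3 * 3 ^ m + 1) * 3 ^ m = 3 * (3 ^ m) ^ 2 + 3 ^ m := by ring
  have e2 : 3 * 3 ^ m * 3 ^ m = 3 * (3 ^ m) ^ 2 := by ring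
  constructor
  · rw [frob, ← pow_mul, ← pow_mul, e1, e2, pow_add]
    linear_combination -h1
  · rw [frob, mul_pow, ← pow_mul, ← pow_mul, e2]
    linear_combination -h2
end

section
/- Let K be a field of characteristic 3, m a natural number, q0 = 3^m. Suppose x, y1, y2, w1, w2, w3, w4, v ∈ K satisfy: w3^{q0} + w1 - y2*x^{q0} = 0; y1*x^{q0} - w2^{q0} - y2 = 0; x^{q0+1} - y1 - w1^{q0} = 0; y1^2 - x*y2 - w4 = 0; x*w1 = y1*y2 - v; and y1*w4 = w3 + x*w2 - x*v. Then w1 = x^{3q0+1} - y1^{3q0}. -/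
/-- Six of the 105 defining equations of the smooth model of the
Ree curve imply Pedersen's relation w1 = x^{3q0+1} - y1^{3q0}. -/
theorem ree_equations_imply_w1
    (K : Type*) [Field K] [CharP K 3] (m q0 : ℕ) (hq0 : q0 = 3 ^ m)
    (x y1 y2 w1 w2 w3 w4 v : K)
    (h1 : w3 ^ q0 + w1 - y2 * x ^ q0 = 0)
    (h2 : y1 * x ^ q0 - w2 ^ q0 - y2 = 0)
    (h3 : x ^ (q0 + 1) - y1 - w1 ^ q0 = 0)
    (h4 : y1 ^ 2 - x * y2 - w4 = 0)
    (h5 : x * w1 = y1 * y2 - v)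
    (h6 : y1 * w4 = w3 + x * w2 - x * v) :
    w1 = x ^ (3 * q0 + 1) - y1 ^ (3 * q0) := by
  have hw3 : w3 = y1 ^ 3 - x * w2 - x ^ 2 * w1 := by
    linear_combination (-1 : K) * h6 - y1 * h4 + x * h5
  have hw3q : w3 ^ q0 = y1 ^ (3 * q0) - x ^ q0 * w2 ^ q0 - (x ^ q0) ^ 2 * w1 ^ q0 := by
    subst hq0 hw3
    rw [sub_pow_char_pow, sub_pow_char_pow]
    ring
  linear_combination h1 - hw3q - x ^ q0 * h2 - x ^ (2 * q0) * h3
end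

section
/- Let K be a field of characteristic 3, m a natural number, q0 = 3^m and q = 3*q0^2. Suppose x, y1, y2 ∈ K satisfy y1^q - y1 = x^{q0}*(x^q - x) and y2^q - y2 = x^{q0}*(y1^q - y1). Define w1 := x^{3q0+1} - y1^{3q0}, w2 := x*y1^{3q0} - y2^{3q0}, w3 := x*y2^{3q0} - w1^{3q0}, w4 := x*w2^{q0} - y1*w1^{q0}, v := x*w3^{q0} - y2*w1^{q0}, and w6 := v^{3q0} - w2^{3q0} + x*w4^{3q0}. Then w6 = x^{6q0+3} - x^{3q0}*w1^{3q0} - w2^{3q0} - x*w1^2 + w1*w2. -/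
/-- Tits' expression of w6 as a polynomial in x, w1, w2, on the
Ree curve. -/
theorem ree_w6_tits_expression
    (K : Type*) [Field K] [CharP K 3] (m q0 q : ℕ)
    (hq0 : q0 = 3 ^ m) (hq : q = 3 * q0 ^ 2)
    (x y1 y2 w1 w2 w3 w4 v w6 : K)
    (h1 : y1 ^ q - y1 = x ^ q0 * (x ^ q - x))
    (h2 : y2 ^ q - y2 = x ^ q0 * (y1 ^ q - y1))
    (hw1 : w1 = x ^ (3 * q0 + 1) - y1 ^ (3 * q0))
    (hw2 : w2 = x * y1 ^ (3 * q0) - y2 ^ (3 * q0))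
    (hw3 : w3 = x * y2 ^ (3 * q0) - w1 ^ (3 * q0))
    (hw4 : w4 = x * w2 ^ q0 - y1 * w1 ^ q0)
    (hv : v = x * w3 ^ q0 - y2 * w1 ^ q0)
    (hw6 : w6 = v ^ (3 * q0) - w2 ^ (3 * q0) + x * w4 ^ (3 * q0)) :
    w6 = x ^ (6 * q0 + 3) - x ^ (3 * q0) * w1 ^ (3 * q0) - w2 ^ (3 * q0)
      - x * w1 ^ 2 + w1 * w2 := by
  have hfact : Fact (Nat.Prime 3) := ⟨by norm_num⟩
  have hF : ∀ a b : K, (a - b) ^ q0 = a ^ q0 - b ^ q0 := by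
    intro a b
    rw [hq0]
    exact sub_pow_char_pow a b m
  have hF3 : ∀ a b : K, (a - b) ^ (3 * q0) = a ^ (3 * q0) - b ^ (3 * q0) := by
    intro a b
    have h3 : 3 * q0 = 3 ^ (m + 1) := by rw [hq0, pow_succ']
    rw [h3]
    exact sub_pow_char_pow a b (m + 1)
  have h3K : (3 : K) = 0 := by
    exact_mod_cast CharP.cast_eq_zero K 3
  -- key identity A : w1 ^ q0 = x ^ q0 * x - y1
  have hA : w1 ^ q0 = x ^ q0 * x - y1 := by
    rw [hw1, hF, ← pow_mul, ← pow_mul,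
      show (3 * q0 + 1) * q0 = q + q0 by subst hq; ring,
      show 3 * q0 * q0 = q by subst hq; ring, pow_add]
    linear_combination -h1
  -- key identity B : w2 ^ q0 = x ^ q0 * y1 - y2
  have hB : w2 ^ q0 = x ^ q0 * y1 - y2 := by
    rw [hw2, hF, mul_pow, ← pow_mul, ← pow_mul,
      show 3 * q0 * q0 = q by subst hq; ring]
    linear_combination -h2
  -- key identity C : w3 ^ q0 = x ^ q0 * y2 - w1
  have hw1q : w1 ^ q = x ^ q * x ^ (3 * q0) - y1 ^ (3 * q0) := by
    rw [show q = q0 * (3 * q0) from by subst hq; ring, pow_mul, hA, hF3, mul_pow,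
      ← pow_mul]
  have hC : w3 ^ q0 = x ^ q0 * y2 - w1 := by
    rw [hw3, hF, mul_pow, ← pow_mul, ← pow_mul,
      show 3 * q0 * q0 = q by subst hq; ring, hw1q, hw1]
    linear_combination x ^ q0 * h2 + x ^ (2 * q0) * h1
  -- simplified w4 and v
  have hw4' : w4 = y1 ^ 2 - x * y2 := by
    rw [hw4, hA, hB]; ring
  have hv' : v = y1 * y2 - x * w1 := by
    rw [hv, hA, hC]; ring
  -- abbreviations
  have hy1 : y1 ^ (3 * q0) = x ^ (3 * q0) * x - w1 := by
    rw [hw1, pow_succ]; ring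
  have hy2 : y2 ^ (3 * q0) = x * y1 ^ (3 * q0) - w2 := by
    rw [hw2]; ring
  rw [hw6, hv', hw4', hF3, hF3, mul_pow, mul_pow]
  linear_combination (2 * x * y1 ^ (3 * q0) + 2 * x * (x ^ (3 * q0) * x - w1)
      - w2 - x ^ 2 * x ^ (3 * q0)) * hy1
    + (y1 ^ (3 * q0) - x * x ^ (3 * q0)) * hy2
    + (x * w1 ^ 2 - x ^ (3 * q0) * x ^ 2 * w1) * h3K
end

section
/- Let K be a field of characteristic 3, m a natural number, q0 = 3^m and q = 3*q0^2. Suppose x, y1, y2 ∈ K satisfy y1^q - y1 = x^{q0}*(x^q - x) and y2^q - y2 = x^{q0}*(y1^q - y1). Let α, β, γ, δ ∈ K with α ≠ 0 and α^q = α, β^q = β, γ^q = γ, δ^q = δ. Define x' := α*x + β, y1' := α^{q0+1}*y1 + α*β^{q0}*x + γ, and y2' := α^{2q0+1}*y2 - α^{q0+1}*β^{q0}*y1 + α*β^{2q0}*x + δ. Then y1'^q - y1' = x'^{q0}*(x'^q - x') and y2'^q - y2' = x'^{q0}*(y1'^q - y1'). -/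
/-- The maps ψ_{α,β,γ,δ} preserve the defining equations of the
Ree curve. -/
theorem ree_automorphism_preserves_equations
    (K : Type*) [Field K] [CharP K 3] (m q0 q : ℕ)
    (hq0 : q0 = 3 ^ m) (hq : q = 3 * q0 ^ 2)
    (x y1 y2 : K)
    (h1 : y1 ^ q - y1 = x ^ q0 * (x ^ q - x))
    (h2 : y2 ^ q - y2 = x ^ q0 * (y1 ^ q - y1))
    (α β γ δ : K) (hα : α ≠ 0)
    (hαq : α ^ q = α) (hβq : β ^ q = β) (hγq : γ ^ q = γ) (hδq : δ ^ q = δ)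
    (x' y1' y2' : K)
    (hx' : x' = α * x + β)
    (hy1' : y1' = α ^ (q0 + 1) * y1 + α * β ^ q0 * x + γ)
    (hy2' : y2' = α ^ (2 * q0 + 1) * y2 - α ^ (q0 + 1) * β ^ q0 * y1
      + α * β ^ (2 * q0) * x + δ) :
    y1' ^ q - y1' = x' ^ q0 * (x' ^ q - x') ∧
    y2' ^ q - y2' = x' ^ q0 * (y1' ^ q - y1') := by
  haveI : Fact (Nat.Prime 3) := ⟨by norm_num⟩
  have hq' : q = 3 ^ (2 * m + 1) := by subst hq hq0; ring
  have h3 : (3 : K) = 0 := by exact_mod_cast CharP.cast_eq_zero K 3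
  have fq : ∀ a b : K, (a + b) ^ q = a ^ q + b ^ q := fun a b => by
    rw [hq']; exact add_pow_char_pow a b 3 (2*m+1)
  have fq0 : ∀ a b : K, (a + b) ^ q0 = a ^ q0 + b ^ q0 := fun a b => by
    rw [hq0]; exact add_pow_char_pow a b 3 m
  have fixα : ∀ n : ℕ, (α ^ n) ^ q = α ^ n := fun n => by
    rw [← pow_mul, mul_comm, pow_mul, hαq]
  have fixβ : ∀ n : ℕ, (β ^ n) ^ q = β ^ n := fun n => by
    rw [← pow_mul, mul_comm, pow_mul, hβq]
  have hoddq : Odd q := hq' ▸ Odd.pow (by decide)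
  have hA : x' ^ q = α * x ^ q + β := by rw [hx', fq, mul_pow, hαq, hβq]
  have hB : x' ^ q0 = α ^ q0 * x ^ q0 + β ^ q0 := by rw [hx', fq0, mul_pow]
  have hC : y1' ^ q = α ^ (q0 + 1) * y1 ^ q + α * β ^ q0 * x ^ q + γ := by
    rw [hy1', fq, fq]
    simp only [mul_pow, fixα, fixβ, hαq, hγq]
  have hD : y2' ^ q = α ^ (2 * q0 + 1) * y2 ^ q - α ^ (q0 + 1) * β ^ q0 * y1 ^ q
      + α * β ^ (2 * q0) * x ^ q + δ := by
    rw [hy2', sub_eq_add_neg, fq, fq, fq, hoddq.neg_pow]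
    simp only [mul_pow, fixα, fixβ, hαq, hδq]
    ring
  constructor
  · rw [hC, hB, hA, hy1', hx']
    linear_combination (α ^ (q0 + 1)) * h1
  · rw [hD, hB, hC, hy2', hy1']
    linear_combination α ^ (2 * q0 + 1) * h2 - 2 * α ^ (q0 + 1) * β ^ q0 * h1
      - α ^ (q0 + 1) * β ^ q0 * x ^ q0 * (x ^ q - x) * h3
end

section
/- Let K be a field of characteristic 2, and let x0, x1, x2, x3, p01, p02, p13, p23, dP ∈ K. Set X := [[x0, x2], [x1, x3]] and P := [[p23, p02], [p13, p01]] (2×2 matrices over K). Assume det P = dP^2 and dP*X = [[0, p02], [p13, 0]]*X + X*[[0, p23], [p01, 0]]. Then (det X)*P = [[0, x2^2], [x1^2, 0]]*P + P*[[0, x0^2], [x3^2, 0]]. -/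
open Matrix

theorem dual_incidence_of_incidence {R : Type*} [CommRing R]
    {x0 x1 x2 x3 p01 p02 p13 p23 d : R}
    (h : d • !![x0, x2; x1, x3] =
      !![0, p02; p13, 0] * !![x0, x2; x1, x3] + !![x0, x2; x1, x3] * !![0, p23; p01, 0]) :
    !![x0, x2; x1, x3].det • !![p23, p02; p13, p01] =
      !![0, x2 ^ 2; x1 ^ 2, 0] * !![p23, p02; p13, p01] -
        !![p23, p02; p13, p01] * !![0, x0 ^ 2; x3 ^ 2, 0] := by
  simp only [mul_fin_two, ← Matrix.ext_iff, Fin.forall_fin_two, Fin.isValue, Matrix.smul_apply, of_apply,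
    cons_val', cons_val_zero, cons_val_one, cons_val_fin_one, smul_eq_mul, zero_mul, zero_add,
    add_zero, mul_zero, Matrix.add_apply, Matrix.sub_apply, det_fin_two_of] at h ⊢
  obtain ⟨⟨h00, h01⟩, h10, h11⟩ := h
  -- Each entry: eliminate `d` between the two incidence equations sharing that coordinate of `P`.
  refine ⟨⟨?_, ?_⟩, ?_, ?_⟩
  · linear_combination x2 * h11 - x3 * h01
  · linear_combination x2 * h00 - x0 * h01
  · linear_combination x1 * h11 - x3 * h10
  · linear_combination x1 * h00 - x0 * h10

theorem suzuki_symplectic_polarity_general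
    (K : Type*) [Field K] [CharP K 2]
    (x0 x1 x2 x3 p01 p02 p13 p23 dP : K)
    (X P : Matrix (Fin 2) (Fin 2) K)
    (hX : X = !![x0, x2; x1, x3])
    (hP : P = !![p23, p02; p13, p01])
    (hinc : dP • X = !![(0 : K), p02; p13, 0] * X + X * !![(0 : K), p23; p01, 0]) :
    X.det • P = !![(0 : K), x2 ^ 2; x1 ^ 2, 0] * P + P * !![(0 : K), x0 ^ 2; x3 ^ 2, 0] := by
  subst hX hP
  rw [← CharTwo.sub_eq_add]
  exact dual_incidence_of_incidence hinc

/-- The duality (polarity) of the symplectic geometry underlying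
the Suzuki group: incidence of a point X with an isotropic line (P, dP) implies
the dual incidence relation. -/
theorem suzuki_symplectic_polarity
    (K : Type*) [Field K] [CharP K 2]
    (x0 x1 x2 x3 p01 p02 p13 p23 dP : K)
    (X P : Matrix (Fin 2) (Fin 2) K)
    (hX : X = !![x0, x2; x1, x3])
    (hP : P = !![p23, p02; p13, p01])
    (hdet : P.det = dP ^ 2)
    (hinc : dP • X = !![(0 : K), p02; p13, 0] * X + X * !![(0 : K), p23; p01, 0]) :
    X.det • P = !![(0 : K), x2 ^ 2; x1 ^ 2, 0] * P + P * !![(0 : K), x0 ^ 2; x3 ^ 2, 0] :=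
  suzuki_symplectic_polarity_general K x0 x1 x2 x3 p01 p02 p13 p23 dP X P hX hP hinc
end
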